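/- arXiv:2305.02960 — 2 statements merged into one kernel-verified Lean document; each statement's English description precedes it below -/
import Mathlib

section
/- Let (ℓ_k)_{k≥1} be a nondecreasing sequence of nonnegative reals with ℓ_0 = 0, and let r ≥ 2 be a real number. Then ∑_{k≥1} r^{-k+1}·√(ℓ_k) ≤ 2·∑_{k≥1} r^{-k+1}·√(ℓ_k − ℓ_{k−1}), provided both series converge. -/
private lemma sqrt_add_le' {u v : ℝ} (hu : 0 ≤ u) (hv : 0 ≤ v) :
    Real.sqrt (u + v) ≤ Real.sqrt u + Real.sqrt v := by
  rw [← Real.sqrt_sq (by positivity : (0:ℝ) ≤ Real.sqrt u + Real.sqrt v)]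
  apply Real.sqrt_le_sqrt
  nlinarith [Real.sq_sqrt hu, Real.sq_sqrt hv, Real.sqrt_nonneg u, Real.sqrt_nonneg v]


/-- Refinement inequality: for a nondecreasing nonnegative sequence ℓ with ℓ 0 = 0 and r ≥ 2,
∑_{k≥1} r^{-k+1} √(ℓ_k) ≤ 2 ∑_{k≥1} r^{-k+1} √(ℓ_k − ℓ_{k-1}), assuming both series converge.
(Indexed so that the ℕ-index j corresponds to k = j+1, and r^{-k+1} = r^{-j}.) -/
theorem stmt0 (ℓ : ℕ → ℝ) (hℓ0 : ℓ 0 = 0) (hmono : Monotone ℓ) (hnonneg : ∀ k, 0 ≤ ℓ k)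
    (r : ℝ) (hr : 2 ≤ r)
    (h1 : Summable (fun j : ℕ => r ^ (-(j : ℝ)) * Real.sqrt (ℓ (j + 1))))
    (h2 : Summable (fun j : ℕ => r ^ (-(j : ℝ)) * Real.sqrt (ℓ (j + 1) - ℓ j))) :
    ∑' j : ℕ, r ^ (-(j : ℝ)) * Real.sqrt (ℓ (j + 1)) ≤
      2 * ∑' j : ℕ, r ^ (-(j : ℝ)) * Real.sqrt (ℓ (j + 1) - ℓ j) := by
  have hr0 : (0:ℝ) < r := lt_of_lt_of_le (by norm_num) hr
  set a : ℕ → ℝ := fun j => r ^ (-(j : ℝ)) * Real.sqrt (ℓ (j + 1)) with ha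
  set b : ℕ → ℝ := fun j => r ^ (-(j : ℝ)) * Real.sqrt (ℓ (j + 1) - ℓ j) with hb
  set c : ℕ → ℝ := fun j => r ^ (-(j : ℝ)) * Real.sqrt (ℓ j) with hc
  have hcshift : ∀ j : ℕ, c (j + 1) = r⁻¹ * a j := by
    intro j
    simp only [hc, ha]
    have : -(((j + 1 : ℕ)) : ℝ) = -1 + -(j : ℝ) := by push_cast; ring
    rw [this, Real.rpow_add hr0, Real.rpow_neg_one]
    ring
  have hcsum : Summable c := by
    rw [← summable_nat_add_iff 1]
    simpa [hcshift] using h1.mul_left r⁻¹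
  have hc0 : c 0 = 0 := by simp [hc, hℓ0]
  have hctsum : ∑' j, c j = r⁻¹ * ∑' j, a j := by
    rw [Summable.tsum_eq_zero_add hcsum, hc0]
    simp only [hcshift]
    rw [tsum_mul_left]
    ring
  have hpt : ∀ j, a j ≤ b j + c j := by
    intro j
    simp only [ha, hb, hc]
    rw [← mul_add]
    apply mul_le_mul_of_nonneg_left _ (Real.rpow_nonneg hr0.le _)
    have h := sqrt_add_le' (sub_nonneg.mpr (hmono (Nat.le_succ j))) (hnonneg j)
    simpa using h
  have hS : ∑' j, a j ≤ ∑' j, b j + r⁻¹ * ∑' j, a j := by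
    calc ∑' j, a j ≤ ∑' j, (b j + c j) := Summable.tsum_le_tsum hpt h1 (h2.add hcsum)
    _ = ∑' j, b j + ∑' j, c j := Summable.tsum_add h2 hcsum
    _ = ∑' j, b j + r⁻¹ * ∑' j, a j := by rw [hctsum]
  have hS0 : 0 ≤ ∑' j, a j := tsum_nonneg fun j =>
    mul_nonneg (Real.rpow_nonneg hr0.le _) (Real.sqrt_nonneg _)
  have hinv : r⁻¹ ≤ 1/2 := by
    rw [inv_le_comm₀ hr0 (by norm_num)]
    linarith
  nlinarith [hS, hS0, hinv]
end

section
/- Let S be a finite set and ℓ : S → ℕ a function satisfying the Kraft–McMillan inequality ∑_{s∈S} 2^{-ℓ(s)} ≤ 1, with ℓ(s) ≥ 1 for all s. Let p > 0 and u > 0. Let (X_s)_{s∈S} and (Y_s)_{s∈S} be real random variables such that for each s and all v > 0, P[|X_s − Y_s| ≥ v·d(s)] ≤ 2·e^{-v²}, where d : S → (0,∞). Then P[∃ s ∈ S : |X_s − Y_s| > d(s)·√(ln(2^{ℓ(s)+1}/p) + u²)] ≤ p·e^{-u²}. -/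
/-!
The threshold is chosen so that the subgaussian tail at level `A = ln(2^(ℓ+1)/p) + u²` is
`2e^{-A} = p · 2^{-ℓ} · e^{-u²}`; summing over the codewords, the Kraft–McMillan inequality
bounds the union by `p · e^{-u²}`.
-/

open MeasureTheory Real

theorem measure_mul_sqrt_lt_le_two_mul_exp_neg {Ω : Type*} [MeasurableSpace Ω] {P : Measure Ω}
    [IsProbabilityMeasure P] {Z : Ω → ℝ} {d : ℝ}
    (htail : ∀ v : ℝ, 0 < v → P {ω | v * d ≤ Z ω} ≤ ENNReal.ofReal (2 * exp (-v ^ 2)))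
    (A : ℝ) :
    P {ω | d * √A < Z ω} ≤ ENNReal.ofReal (2 * exp (-A)) := by
  rcases le_or_gt A 0 with hA | hA
  · refine prob_le_one.trans (ENNReal.one_le_ofReal.2 ?_)
    have : 1 ≤ exp (-A) := one_le_exp (neg_nonneg.2 hA)
    linarith
  · calc P {ω | d * √A < Z ω} ≤ P {ω | √A * d ≤ Z ω} :=
          measure_mono fun ω hω => by rw [Set.mem_ofPred_eq, mul_comm]; exact le_of_lt hω
      _ ≤ ENNReal.ofReal (2 * exp (-A)) := by
          simpa only [sq_sqrt hA.le] using htail _ (sqrt_pos.2 hA)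

theorem two_mul_exp_neg_log_two_rpow_div {p : ℝ} (hp : 0 < p) (t w : ℝ) :
    2 * exp (-(log (2 ^ (t + 1) / p) + w)) = p * exp (-w) * 2 ^ (-t) := by
  rw [neg_add, exp_add, exp_neg, exp_log (by positivity), rpow_add two_pos, rpow_one,
    rpow_neg zero_le_two]
  field_simp

theorem sum_ofReal_mul_le_ofReal_of_sum_le_one {S : Type*} [Fintype S] {w : S → ℝ}
    (hw : ∀ s, 0 ≤ w s) (hsum : ∑ s, w s ≤ 1) {c : ℝ} (hc : 0 ≤ c) :
    ∑ s, ENNReal.ofReal (c * w s) ≤ ENNReal.ofReal c := by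
  rw [← ENNReal.ofReal_sum_of_nonneg fun s _ => mul_nonneg hc (hw s), ← Finset.mul_sum]
  exact ENNReal.ofReal_le_ofReal (mul_le_of_le_one_right hc hsum)

theorem stmt4_general {Ω : Type*} [MeasurableSpace Ω] (P : Measure Ω) [IsProbabilityMeasure P]
    {S : Type*} [Fintype S] (ℓ : S → ℕ)
    (hKraft : ∑ s : S, (2 : ℝ) ^ (-(ℓ s : ℝ)) ≤ 1)
    (d : S → ℝ)
    (p u : ℝ) (hp : 0 < p)
    (X Y : S → Ω → ℝ)
    (hinc : ∀ s : S, ∀ v : ℝ, 0 < v →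
      P {ω | v * d s ≤ |X s ω - Y s ω|} ≤ ENNReal.ofReal (2 * Real.exp (-v ^ 2))) :
    P {ω | ∃ s : S,
        d s * Real.sqrt (Real.log ((2 : ℝ) ^ ((ℓ s : ℝ) + 1) / p) + u ^ 2)
          < |X s ω - Y s ω|} ≤
      ENNReal.ofReal (p * Real.exp (-u ^ 2)) := by
  rw [Set.ofPred_exists]
  calc _ ≤ ∑ s, P {ω | d s * √(log (2 ^ ((ℓ s : ℝ) + 1) / p) + u ^ 2) < |X s ω - Y s ω|} :=
        measure_iUnion_fintype_le _ _
    _ ≤ ∑ s, ENNReal.ofReal (p * exp (-u ^ 2) * 2 ^ (-(ℓ s : ℝ))) :=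
        Finset.sum_le_sum fun s _ => by
          rw [← two_mul_exp_neg_log_two_rpow_div hp]
          exact measure_mul_sqrt_lt_le_two_mul_exp_neg (hinc s) _
    _ ≤ ENNReal.ofReal (p * exp (-u ^ 2)) :=
        sum_ofReal_mul_le_ofReal_of_sum_le_one (fun s => by positivity) hKraft (by positivity)

/-- Single-scale union-bound step: under the subgaussian increment condition and the
Kraft–McMillan inequality for the codelengths ℓ, the probability that some deviation
|X_s − Y_s| exceeds d(s)·√(ln(2^{ℓ(s)+1}/p) + u²) is at most p·e^{-u²}. -/
theorem stmt4 {Ω : Type*} [MeasurableSpace Ω] (P : Measure Ω) [IsProbabilityMeasure P]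
    {S : Type*} [Fintype S] (ℓ : S → ℕ) (hℓ1 : ∀ s, 1 ≤ ℓ s)
    (hKraft : ∑ s : S, (2 : ℝ) ^ (-(ℓ s : ℝ)) ≤ 1)
    (d : S → ℝ) (hd : ∀ s, 0 < d s)
    (p u : ℝ) (hp : 0 < p) (hu : 0 < u)
    (X Y : S → Ω → ℝ)
    (hinc : ∀ s : S, ∀ v : ℝ, 0 < v →
      P {ω | v * d s ≤ |X s ω - Y s ω|} ≤ ENNReal.ofReal (2 * Real.exp (-v ^ 2))) :
    P {ω | ∃ s : S,
        d s * Real.sqrt (Real.log ((2 : ℝ) ^ ((ℓ s : ℝ) + 1) / p) + u ^ 2)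
          < |X s ω - Y s ω|} ≤
      ENNReal.ofReal (p * Real.exp (-u ^ 2)) :=
  stmt4_general P ℓ hKraft d p u hp X Y hinc
end
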